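/- arXiv:1307.6287 — 2 statements merged into one kernel-verified Lean document; each statement's English description precedes it below -/
import Mathlib

section
/- Let A be a Banach algebra with a bounded approximate identity, and suppose Δ : A⊗̂A → A is the multiplication map. If ψ ∈ A* satisfies Δ*(ψ) ∈ ((A⊗̂A)*)_ess, then ψ ∈ (A*)_ess. Combined with the converse (which holds since Δ* is a bimodule map), (A*)_ess = {ψ ∈ A* : Δ*(ψ) ∈ ((A⊗̂A)*)_ess}. -/
open Filter ContinuousLinearMap
open scoped Topology

noncomputable section

/-- Bounded approximate identity, encoded as a bounded filter on `A`. -/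
def HasBAI (A : Type*) [NormedRing A] [NormedAlgebra ℂ A] : Prop :=
  ∃ F : Filter A, F.NeBot ∧ (∃ C : ℝ, ∀ᶠ x in F, ‖x‖ ≤ C) ∧
    ∀ a : A, Tendsto (fun x => x * a) F (𝓝 a) ∧ Tendsto (fun x => a * x) F (𝓝 a)

set_option maxHeartbeats 1000000 in
/-- if `A` has a b.a.i. and `Δ : A ⊗̂ A → A` is the multiplication map,
then `(A*)_ess = {ψ ∈ A* : Δ*(ψ) ∈ ((A⊗̂A)*)_ess}`.  The projective tensor product is
presented as a Banach `A`-bimodule `Z` with elementary tensor map `tp` having dense span,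
actions `a·(b⊗c) = ab⊗c`, `(b⊗c)·a = b⊗ca`, and `Δ(b⊗c) = bc`; essential parts of
dual modules are closed linear spans of two-sided orbits `a·φ·b`. -/
theorem essential_part_dual_pullback_multiplication
    (A Z : Type*) [NormedRing A] [NormedAlgebra ℂ A] [CompleteSpace A]
    [NormedAddCommGroup Z] [NormedSpace ℂ Z] [CompleteSpace Z]
    (tp : A →L[ℂ] A →L[ℂ] Z)
    (htp_norm : ∀ a b, ‖tp a b‖ = ‖a‖ * ‖b‖)
    (hdense : Dense (Submodule.span ℂ {z : Z | ∃ a b, z = tp a b} : Set Z))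
    (lZ rZ : A →L[ℂ] Z →L[ℂ] Z)
    (hlZ : ∀ a b c, lZ a (tp b c) = tp (a * b) c)
    (hrZ : ∀ a b c, rZ a (tp b c) = tp b (c * a))
    (Δ : Z →L[ℂ] A)
    (hΔ : ∀ a b, Δ (tp a b) = a * b)
    (hbai : HasBAI A)
    (EssA : Set (A →L[ℂ] ℂ))
    (hEssA : EssA = closure (Submodule.span ℂ
      {φ : A →L[ℂ] ℂ | ∃ (a b : A) (ψ : A →L[ℂ] ℂ),
        φ = (ψ.comp (mul ℂ A b)).comp ((mul ℂ A).flip a)} : Set (A →L[ℂ] ℂ)))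
    (EssZ : Set (Z →L[ℂ] ℂ))
    (hEssZ : EssZ = closure (Submodule.span ℂ
      {Φ : Z →L[ℂ] ℂ | ∃ (a b : A) (Ψ : Z →L[ℂ] ℂ),
        Φ = (Ψ.comp (lZ b)).comp (rZ a)} : Set (Z →L[ℂ] ℂ)))
    (ψ : A →L[ℂ] ℂ) :
    ψ ∈ EssA ↔ ψ.comp Δ ∈ EssZ := by
  obtain ⟨F, hF, ⟨C₀, hC₀⟩, hco⟩ := hbai
  haveI := hF
  set SA : Set (A →L[ℂ] ℂ) := {φ : A →L[ℂ] ℂ | ∃ (a b : A) (ψ : A →L[ℂ] ℂ),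
        φ = (ψ.comp (mul ℂ A b)).comp ((mul ℂ A).flip a)} with hSA
  set SZ : Set (Z →L[ℂ] ℂ) := {Φ : Z →L[ℂ] ℂ | ∃ (a b : A) (Ψ : Z →L[ℂ] ℂ),
        Φ = (Ψ.comp (lZ b)).comp (rZ a)} with hSZ
  set C : ℝ := max C₀ 0 with hC
  have hCnn : (0:ℝ) ≤ C := le_max_right _ _
  have hCb : ∀ᶠ x in F, ‖x‖ ≤ C := hC₀.mono fun x hx => hx.trans (le_max_left _ _)
  -- bounded below: ‖φ‖ ≤ C * ‖φ ∘ Δ‖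
  have hbb : ∀ φ : A →L[ℂ] ℂ, ‖φ‖ ≤ C * ‖φ.comp Δ‖ := by
    intro φ
    refine φ.opNorm_le_bound (by positivity) (fun x => ?_)
    have ht : Tendsto (fun e : A => ‖φ (e * x)‖) F (𝓝 ‖φ x‖) :=
      (continuous_norm.tendsto _).comp ((φ.continuous.tendsto x).comp (hco x).1)
    refine le_of_tendsto ht (hCb.mono fun e he => ?_)
    have h1 : φ (e * x) = (φ.comp Δ) (tp e x) := by simp [hΔ]
    calc ‖φ (e * x)‖ = ‖(φ.comp Δ) (tp e x)‖ := by rw [h1]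
      _ ≤ ‖φ.comp Δ‖ * ‖tp e x‖ := (φ.comp Δ).le_opNorm _
      _ = ‖φ.comp Δ‖ * (‖e‖ * ‖x‖) := by rw [htp_norm]
      _ ≤ ‖φ.comp Δ‖ * (C * ‖x‖) :=
          mul_le_mul_of_nonneg_left (mul_le_mul_of_nonneg_right he (norm_nonneg x))
            (norm_nonneg _)
      _ = C * ‖φ.comp Δ‖ * ‖x‖ := by ring
  -- dense extension
  have hext : ∀ {W : Type _} [inst : NormedAddCommGroup W] [inst2 : NormedSpace ℂ W]
      (f g : Z →L[ℂ] W), (∀ a b, f (tp a b) = g (tp a b)) → f = g := by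
    intro W _ _ f g h
    refine ContinuousLinearMap.ext_on hdense ?_
    rintro z ⟨a, b, rfl⟩
    exact h a b
  -- intertwining identities
  have hkey : ∀ (Ψ : Z →L[ℂ] ℂ) (a b e : A),
      ((((Ψ.comp (lZ b)).comp (rZ a)).comp (lZ e)).comp (rZ e) : Z →L[ℂ] ℂ)
        = (Ψ.comp (lZ (b * e))).comp (rZ (e * a)) := by
    intro Ψ a b e
    refine hext _ _ (fun x y => ?_)
    simp only [ContinuousLinearMap.comp_apply, hlZ, hrZ]
    simp [mul_assoc]
  have hpull : ∀ (ψ' : A →L[ℂ] ℂ) (a b : A),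
      (((ψ'.comp (mul ℂ A b)).comp ((mul ℂ A).flip a)).comp Δ : Z →L[ℂ] ℂ)
        = ((ψ'.comp Δ).comp (lZ b)).comp (rZ a) := by
    intro ψ' a b
    refine hext _ _ (fun x y => ?_)
    simp only [ContinuousLinearMap.comp_apply, hlZ, hrZ, hΔ,
      ContinuousLinearMap.flip_apply, ContinuousLinearMap.mul_apply']
    simp [mul_assoc]
  constructor
  · -- forward
    intro hψ
    rw [hEssA] at hψ
    rw [hEssZ]
    set Θ : (A →L[ℂ] ℂ) →L[ℂ] (Z →L[ℂ] ℂ) := (ContinuousLinearMap.compL ℂ Z A ℂ).flip Δ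
      with hΘ
    have hΘap : ∀ φ : A →L[ℂ] ℂ, Θ φ = φ.comp Δ := fun φ => rfl
    have hsub : Θ '' (Submodule.span ℂ SA : Set _) ⊆ (Submodule.span ℂ SZ : Set _) := by
      intro Φ hΦ
      obtain ⟨φ, hφ, rfl⟩ := hΦ
      have : (Submodule.span ℂ SA).map (Θ : (A →L[ℂ] ℂ) →ₗ[ℂ] (Z →L[ℂ] ℂ))
          ≤ Submodule.span ℂ SZ := by
        rw [Submodule.map_span]
        refine Submodule.span_le.2 ?_
        rintro _ ⟨φ', ⟨a, b, ψ', rfl⟩, rfl⟩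
        refine Submodule.subset_span ⟨a, b, ψ'.comp Δ, ?_⟩
        simp only [ContinuousLinearMap.coe_coe]
        rw [hΘap, hpull]
      exact this ⟨φ, hφ, rfl⟩
    have h1 : Θ ψ ∈ closure (Θ '' (Submodule.span ℂ SA : Set _)) :=
      image_closure_subset_closure_image Θ.continuous ⟨ψ, hψ, rfl⟩
    have h2 := closure_mono hsub h1
    rwa [hΘap] at h2
  · -- backward
    intro h
    rw [hEssZ] at h
    rw [hEssA]
    set D : ℝ := (‖lZ‖ * C) * (‖rZ‖ * C) with hD
    have hDnn : (0:ℝ) ≤ D := by positivity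
    set K : ℝ := C * (D + 2) + 1 with hK
    have hKpos : (0:ℝ) < K := by positivity
    -- norm bound for the averaging operator
    have hTnorm : ∀ (Ξ : Z →L[ℂ] ℂ) (e : A), ‖e‖ ≤ C →
        ‖(Ξ.comp (lZ e)).comp (rZ e)‖ ≤ D * ‖Ξ‖ := by
      intro Ξ e he
      have h1 : ‖(Ξ.comp (lZ e)).comp (rZ e)‖ ≤ ‖Ξ.comp (lZ e)‖ * ‖rZ e‖ :=
        opNorm_comp_le _ _
      have h2 : ‖Ξ.comp (lZ e)‖ ≤ ‖Ξ‖ * ‖lZ e‖ := opNorm_comp_le _ _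
      have h3 : ‖lZ e‖ ≤ ‖lZ‖ * C :=
        (lZ.le_opNorm e).trans (mul_le_mul_of_nonneg_left he (norm_nonneg _))
      have h4 : ‖rZ e‖ ≤ ‖rZ‖ * C :=
        (rZ.le_opNorm e).trans (mul_le_mul_of_nonneg_left he (norm_nonneg _))
      calc ‖(Ξ.comp (lZ e)).comp (rZ e)‖ ≤ ‖Ξ.comp (lZ e)‖ * ‖rZ e‖ := h1
        _ ≤ (‖Ξ‖ * ‖lZ e‖) * ‖rZ e‖ := mul_le_mul_of_nonneg_right h2 (norm_nonneg _)
        _ ≤ (‖Ξ‖ * (‖lZ‖ * C)) * (‖rZ‖ * C) :=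
            mul_le_mul (mul_le_mul_of_nonneg_left h3 (norm_nonneg _)) h4
              (norm_nonneg _) (by positivity)
        _ = D * ‖Ξ‖ := by ring
    rw [Metric.mem_closure_iff]
    intro ε hε
    have hεK : 0 < ε / K := by positivity
    rw [Metric.mem_closure_iff] at h
    obtain ⟨Φ', hΦ'mem, hΦ'close⟩ := h (ε / K) hεK
    -- tendsto of averaged Φ' to Φ'
    have htend : Tendsto (fun e : A => (Φ'.comp (lZ e)).comp (rZ e)) F (𝓝 Φ') := by
      refine Submodule.span_induction (p := fun Φ _ =>
        Tendsto (fun e : A => (Φ.comp (lZ e)).comp (rZ e)) F (𝓝 Φ)) ?_ ?_ ?_ ?_ hΦ'mem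
      · rintro Φ ⟨a, b, Ψ, rfl⟩
        have hcont : Continuous (fun p : A × A =>
            ((Ψ.comp (lZ p.1)).comp (rZ p.2) : Z →L[ℂ] ℂ)) := by
          exact ((lZ.continuous.comp continuous_fst).const_clm_comp Ψ).clm_comp
            (rZ.continuous.comp continuous_snd)
        have hpt : Tendsto (fun e : A => ((b * e, e * a) : A × A)) F (𝓝 (b, a)) :=
          ((hco b).2.prodMk_nhds (hco a).1)
        have := (hcont.tendsto (b, a)).comp hpt
        simp only [Function.comp] at this
        convert this using 2 with e
        exact hkey Ψ a b e
      · simp only [zero_comp]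
        exact tendsto_const_nhds
      · intro Φ₁ Φ₂ h₁ h₂ t₁ t₂
        simp only [add_comp]
        exact t₁.add t₂
      · intro c Φ₁ h₁ t₁
        simp only [smul_comp]
        exact t₁.const_smul c
    have hev : ∀ᶠ e in F, ‖e‖ ≤ C ∧ ‖(Φ'.comp (lZ e)).comp (rZ e) - Φ'‖ < ε / K := by
      refine hCb.and ?_
      have := Metric.tendsto_nhds.1 htend (ε / K) hεK
      exact this.mono fun e he => by rwa [dist_eq_norm] at he
    obtain ⟨e, heC, heΦ⟩ := hev.exists
    set φe : A →L[ℂ] ℂ := (ψ.comp (mul ℂ A e)).comp ((mul ℂ A).flip e) with hφe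
    have hφemem : φe ∈ (Submodule.span ℂ SA : Set _) :=
      Submodule.subset_span ⟨e, e, ψ, rfl⟩
    -- the pullback identity for φe
    have hΔφe : φe.comp Δ = ((ψ.comp Δ).comp (lZ e)).comp (rZ e) := hpull ψ e e
    -- estimate
    have hsplit : φe.comp Δ - ψ.comp Δ
        = (((ψ.comp Δ - Φ').comp (lZ e)).comp (rZ e))
          + ((Φ'.comp (lZ e)).comp (rZ e) - Φ') + (Φ' - ψ.comp Δ) := by
      rw [hΔφe]
      simp only [sub_comp]
      abel
    have hn1 : ‖((ψ.comp Δ - Φ').comp (lZ e)).comp (rZ e)‖ ≤ D * (ε / K) := by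
      refine (hTnorm _ e heC).trans ?_
      have : ‖ψ.comp Δ - Φ'‖ ≤ ε / K := by
        rw [← dist_eq_norm]; exact hΦ'close.le
      gcongr
    have hn3 : ‖Φ' - ψ.comp Δ‖ ≤ ε / K := by
      rw [norm_sub_rev, ← dist_eq_norm]; exact hΦ'close.le
    have htotal : ‖φe.comp Δ - ψ.comp Δ‖ ≤ (D + 2) * (ε / K) := by
      rw [hsplit]
      calc ‖_ + _ + _‖ ≤ ‖(((ψ.comp Δ - Φ').comp (lZ e)).comp (rZ e))
            + ((Φ'.comp (lZ e)).comp (rZ e) - Φ')‖ + ‖Φ' - ψ.comp Δ‖ := norm_add_le _ _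
        _ ≤ ‖(((ψ.comp Δ - Φ').comp (lZ e)).comp (rZ e))‖
            + ‖((Φ'.comp (lZ e)).comp (rZ e) - Φ')‖ + ‖Φ' - ψ.comp Δ‖ := by
            gcongr; exact norm_add_le _ _
        _ ≤ D * (ε / K) + ε / K + ε / K := by gcongr
        _ = (D + 2) * (ε / K) := by ring
    have hfinal : ‖φe - ψ‖ ≤ C * (D + 2) * (ε / K) := by
      have : (φe - ψ).comp Δ = φe.comp Δ - ψ.comp Δ := by simp [sub_comp]
      calc ‖φe - ψ‖ ≤ C * ‖(φe - ψ).comp Δ‖ := hbb _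
        _ = C * ‖φe.comp Δ - ψ.comp Δ‖ := by rw [this]
        _ ≤ C * ((D + 2) * (ε / K)) := by gcongr
        _ = C * (D + 2) * (ε / K) := by ring
    refine ⟨φe, hφemem, ?_⟩
    rw [dist_eq_norm, norm_sub_rev]
    calc ‖φe - ψ‖ ≤ C * (D + 2) * (ε / K) := hfinal
      _ < K * (ε / K) := by
          have : C * (D + 2) < K := by rw [hK]; linarith
          gcongr
      _ = ε := by field_simp

end
end

section
/- Let A = ℓ¹(ℕ_min) (with product induced by min). For every Ψ in the essential part of (A⊗̂A)*, the sets {c·Ψ : c ∈ A, ‖c‖₁ ≤ 1} and {Ψ·c : c ∈ A, ‖c‖₁ ≤ 1} are relatively norm-compact in (A⊗̂A)*; in particular both orbit maps c ↦ c·Ψ and c ↦ Ψ·c are weakly compact, so ((A⊗̂A)*)_ess ⊆ WAP_A((A⊗̂A)*). -/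
open Metric ContinuousLinearMap
open Pointwise

noncomputable section

/-- Weakly compact operator: image of the closed unit ball is relatively weakly compact. -/
def IsWeaklyCompactOp {X Y : Type*} [NormedAddCommGroup X] [NormedSpace ℂ X]
    [NormedAddCommGroup Y] [NormedSpace ℂ Y] (f : X →L[ℂ] Y) : Prop :=
  IsCompact (closure (toWeakSpace ℂ Y '' (f '' closedBall (0 : X) 1)))


lemma totallyBounded_of_approx {X : Type*} [PseudoMetricSpace X] {s : Set X}
    (h : ∀ ε > (0:ℝ), ∃ t : Set X, TotallyBounded t ∧ ∀ x ∈ s, ∃ y ∈ t, dist x y ≤ ε) :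
    TotallyBounded s := by
  rw [Metric.totallyBounded_iff]
  intro ε hε
  obtain ⟨t, ht, hst⟩ := h (ε/3) (by positivity)
  obtain ⟨u, hu, htu⟩ := Metric.totallyBounded_iff.1 ht (ε/3) (by positivity)
  refine ⟨u, hu, fun x hx => ?_⟩
  obtain ⟨y, hyt, hxy⟩ := hst x hx
  obtain ⟨z, hz, hyz⟩ := Set.mem_iUnion₂.1 (htu hyt)
  refine Set.mem_iUnion₂.2 ⟨z, hz, Metric.mem_ball.2 ?_⟩
  have h1 : dist y z < ε/3 := Metric.mem_ball.1 hyz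
  calc dist x z ≤ dist x y + dist y z := dist_triangle x y z
    _ < ε := by linarith

lemma totallyBounded_add {X : Type*} [SeminormedAddCommGroup X] {s t : Set X}
    (hs : TotallyBounded s) (ht : TotallyBounded t) : TotallyBounded (s + t) := by
  rw [Metric.totallyBounded_iff]
  intro ε hε
  obtain ⟨u, hu, hsu⟩ := Metric.totallyBounded_iff.1 hs (ε/2) (by positivity)
  obtain ⟨v, hv, htv⟩ := Metric.totallyBounded_iff.1 ht (ε/2) (by positivity)
  refine ⟨u + v, hu.add hv, ?_⟩
  rintro _ ⟨x, hx, y, hy, rfl⟩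
  obtain ⟨a, ha, hxa⟩ := Set.mem_iUnion₂.1 (hsu hx)
  obtain ⟨b, hb, hyb⟩ := Set.mem_iUnion₂.1 (htv hy)
  refine Set.mem_iUnion₂.2 ⟨a + b, Set.add_mem_add ha hb, Metric.mem_ball.2 ?_⟩
  have h1 : dist x a < ε/2 := Metric.mem_ball.1 hxa
  have h2 : dist y b < ε/2 := Metric.mem_ball.1 hyb
  calc dist (x + y) (a + b) ≤ dist x a + dist y b := dist_add_add_le x y a b
    _ < ε := by linarith

lemma isWeaklyCompact_of_compact {X Y : Type*} [NormedAddCommGroup X] [NormedSpace ℂ X]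
    [NormedAddCommGroup Y] [NormedSpace ℂ Y] (f : X →L[ℂ] Y)
    (h : IsCompact (closure (f '' closedBall (0 : X) 1))) :
    IsCompact (closure (toWeakSpace ℂ Y '' (f '' closedBall (0 : X) 1))) := by
  have hconv : Convex ℝ (f '' closedBall (0 : X) 1) :=
    (convex_closedBall (0 : X) 1).linear_image ((f.restrictScalars ℝ).toLinearMap)
  have hkey := hconv.toWeakSpace_closure (𝕜 := ℂ)
  rw [← hkey]
  have : (toWeakSpace ℂ Y) '' (closure (f '' closedBall (0 : X) 1)) =
      (toWeakSpaceCLM ℂ Y) '' (closure (f '' closedBall (0 : X) 1)) :=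
    Set.image_congr (fun x _ => (toWeakSpaceCLM_eq_toWeakSpace ℂ Y x).symm)
  rw [this]
  exact h.image (toWeakSpaceCLM ℂ Y).continuous

set_option maxHeartbeats 2000000 in
/-- let `A = ℓ¹(ℕ_min)` (a Banach algebra with an isometric ℓ¹-basis of
point masses `δ_n` satisfying `δ_m δ_n = δ_{min m n}`), and present `A ⊗̂ A` as a Banach
`A`-bimodule `Z` with elementary tensors `tp`.  For every `Ψ` in the essential part of
`Z* = (A⊗̂A)*`, the two bounded orbits `{c·Ψ : ‖c‖ ≤ 1}` and `{Ψ·c : ‖c‖ ≤ 1}` are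
relatively norm-compact; in particular both orbit maps are weakly compact, so
`((A⊗̂A)*)_ess ⊆ WAP_A((A⊗̂A)*)`. -/
theorem l1_min_essential_dual_orbits_compact
    (A Z : Type*) [NormedRing A] [NormedAlgebra ℂ A] [CompleteSpace A]
    [NormedAddCommGroup Z] [NormedSpace ℂ Z] [CompleteSpace Z]
    -- A is ℓ¹ of the semigroup (ℕ, min):
    (δ : ℕ → A)
    (hδmul : ∀ m n, δ m * δ n = δ (min m n))
    (hδnorm : ∀ (c : ℕ → ℂ) (s : Finset ℕ), ‖∑ i ∈ s, c i • δ i‖ = ∑ i ∈ s, ‖c i‖)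
    (hδdense : Dense (Submodule.span ℂ (Set.range δ) : Set A))
    -- Z is the projective tensor product A ⊗̂ A as an A-bimodule:
    (tp : A →L[ℂ] A →L[ℂ] Z)
    (htp_norm : ∀ a b, ‖tp a b‖ = ‖a‖ * ‖b‖)
    (hdense : Dense (Submodule.span ℂ {z : Z | ∃ a b, z = tp a b} : Set Z))
    (lZ rZ : A →L[ℂ] Z →L[ℂ] Z)
    (hlZ : ∀ a b c, lZ a (tp b c) = tp (a * b) c)
    (hrZ : ∀ a b c, rZ a (tp b c) = tp b (c * a))
    -- the essential part of Z*:
    (EssZ : Set (Z →L[ℂ] ℂ))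
    (hEssZ : EssZ = closure (Submodule.span ℂ
      {Φ : Z →L[ℂ] ℂ | ∃ (a b : A) (Ψ : Z →L[ℂ] ℂ),
        Φ = (Ψ.comp (lZ b)).comp (rZ a)} : Set (Z →L[ℂ] ℂ))) :
    ∀ Ψ ∈ EssZ,
      IsCompact (closure ((fun c : A => Ψ.comp (rZ c)) '' closedBall (0 : A) 1)) ∧
      IsCompact (closure ((fun c : A => Ψ.comp (lZ c)) '' closedBall (0 : A) 1)) ∧
      IsWeaklyCompactOp ((compL ℂ Z Z ℂ Ψ).comp rZ) ∧
      IsWeaklyCompactOp ((compL ℂ Z Z ℂ Ψ).comp lZ) := by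
  set B : Set A := closedBall (0 : A) 1 with hB
  have hBnorm : ∀ c ∈ B, ‖c‖ ≤ 1 := by
    intro c hc
    simpa [hB, mem_closedBall_iff_norm] using hc
  -- two continuous linear maps on Z agreeing on elementary tensors agree
  have extZ : ∀ (f g : Z →L[ℂ] Z), (∀ a b, f (tp a b) = g (tp a b)) → f = g := by
    intro f g h
    refine ContinuousLinearMap.ext_on hdense ?_
    rintro z ⟨a, b, rfl⟩
    exact h a b
  have hrr : ∀ a c : A, (rZ a).comp (rZ c) = rZ (c * a) := by
    intro a c
    apply extZ
    intro x y
    simp [hrZ, mul_assoc]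
  have hll : ∀ b c : A, (lZ b).comp (lZ c) = lZ (b * c) := by
    intro b c
    apply extZ
    intro x y
    simp [hlZ, mul_assoc]
  have hlr : ∀ a c : A, (rZ a).comp (lZ c) = (lZ c).comp (rZ a) := by
    intro a c
    apply extZ
    intro x y
    simp [hlZ, hrZ]
  -- membership of translates in finite-dimensional subspaces
  have key : ∀ n : ℕ, ∀ c : A,
      c * δ n ∈ Submodule.span ℂ (δ '' Set.Iic n) ∧
      δ n * c ∈ Submodule.span ℂ (δ '' Set.Iic n) := by
    intro n
    intro c
    set V := Submodule.span ℂ (δ '' Set.Iic n) with hV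
    have hfd : FiniteDimensional ℂ V :=
      FiniteDimensional.span_of_finite ℂ ((Set.finite_Iic n).image δ)
    have hVc : IsClosed (V : Set A) := Submodule.closed_of_finiteDimensional V
    have haux : ∀ (L : A →ₗ[ℂ] A), Continuous L → (∀ m, L (δ m) ∈ V) →
        ∀ c : A, L c ∈ V := by
      intro L hLc hLδ c
      have hSc : IsClosed {x : A | L x ∈ V} := hVc.preimage hLc
      have hsub : (Submodule.span ℂ (Set.range δ) : Set A) ⊆ {x : A | L x ∈ V} := by
        intro x hx
        have : x ∈ V.comap L := by
          refine Submodule.span_le.2 ?_ hx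
          rintro _ ⟨m, rfl⟩
          exact hLδ m
        exact this
      have hcl : closure (Submodule.span ℂ (Set.range δ) : Set A) ⊆ {x : A | L x ∈ V} :=
        closure_minimal hsub hSc
      have := hδdense.closure_eq
      exact hcl (by rw [this]; trivial)
    constructor
    · refine haux (LinearMap.mulRight ℂ (δ n)) ?_ ?_ c
      · exact continuous_mul_right (δ n)
      · intro m
        simp only [LinearMap.mulRight_apply, hδmul]
        exact Submodule.subset_span ⟨min m n, Set.mem_Iic.2 (min_le_right m n), rfl⟩
    · refine haux (LinearMap.mulLeft ℂ (δ n)) ?_ ?_ c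
      · exact continuous_mul_left (δ n)
      · intro m
        simp only [LinearMap.mulLeft_apply, hδmul]
        exact Submodule.subset_span ⟨min n m, Set.mem_Iic.2 (min_le_left n m), rfl⟩
  have hδ1 : ∀ n, ‖δ n‖ = 1 := by
    intro n
    have := hδnorm (fun _ => 1) {n}
    simpa using this
  -- orbits of δ n are totally bounded
  have tbδ : ∀ n : ℕ,
      TotallyBounded ((fun c => c * δ n) '' B) ∧
      TotallyBounded ((fun c => δ n * c) '' B) := by
    intro n
    set V := Submodule.span ℂ (δ '' Set.Iic n) with hV
    have hfd : FiniteDimensional ℂ V :=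
      FiniteDimensional.span_of_finite ℂ ((Set.finite_Iic n).image δ)
    have hproper : ProperSpace V := FiniteDimensional.proper ℂ V
    have hcomp : IsCompact (closedBall (0 : V) 1) := isCompact_closedBall _ _
    have htbV : TotallyBounded ((Subtype.val : V → A) '' closedBall (0 : V) 1) :=
      (hcomp.totallyBounded).image uniformContinuous_subtype_val
    have hsub : ∀ (x : A), x ∈ V → ‖x‖ ≤ 1 →
        x ∈ (Subtype.val : V → A) '' closedBall (0 : V) 1 := by
      intro x hxV hx1
      refine ⟨⟨x, hxV⟩, ?_, rfl⟩
      simpa [mem_closedBall_iff_norm] using hx1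
    constructor
    · refine TotallyBounded.subset ?_ htbV
      rintro _ ⟨c, hc, rfl⟩
      refine hsub _ (key n c).1 ?_
      calc ‖c * δ n‖ ≤ ‖c‖ * ‖δ n‖ := norm_mul_le _ _
        _ ≤ 1 * 1 := by
            have := hBnorm c hc
            have h1 := (hδ1 n).le
            exact mul_le_mul this h1 (norm_nonneg _) zero_le_one
        _ = 1 := one_mul 1
    · refine TotallyBounded.subset ?_ htbV
      rintro _ ⟨c, hc, rfl⟩
      refine hsub _ (key n c).2 ?_
      calc ‖δ n * c‖ ≤ ‖δ n‖ * ‖c‖ := norm_mul_le _ _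
        _ ≤ 1 * 1 := by
            have := hBnorm c hc
            have h1 := (hδ1 n).le
            exact mul_le_mul h1 this (norm_nonneg _) zero_le_one
        _ = 1 := one_mul 1
  -- orbits of arbitrary a: right multiplication
  have Wr : ∀ a : A, TotallyBounded ((fun c => c * a) '' B) := by
    have hspan : ∀ a ∈ Submodule.span ℂ (Set.range δ),
        TotallyBounded ((fun c => c * a) '' B) := by
      intro a ha
      induction ha using Submodule.span_induction with
      | mem x hx =>
          obtain ⟨n, rfl⟩ := hx
          exact (tbδ n).1
      | zero =>
          have : ((fun c => c * (0:A)) '' B).Subsingleton := by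
            rintro _ ⟨c, -, rfl⟩ _ ⟨d, -, rfl⟩
            simp
          exact this.totallyBounded
      | add x y hx hy ihx ihy =>
          refine TotallyBounded.subset ?_ (totallyBounded_add ihx ihy)
          rintro _ ⟨c, hc, rfl⟩
          exact ⟨c * x, ⟨c, hc, rfl⟩, c * y, ⟨c, hc, rfl⟩, (mul_add c x y).symm⟩
      | smul t x hx ih =>
          have heq : ((fun c => c * (t • x)) '' B) =
              (fun z => t • z) '' ((fun c => c * x) '' B) := by
            rw [Set.image_image]
            exact Set.image_congr (fun c _ => mul_smul_comm t c x)
          rw [heq]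
          exact ih.image (uniformContinuous_const_smul t)
    intro a
    refine totallyBounded_of_approx fun ε hε => ?_
    obtain ⟨a', ha'mem, ha'⟩ := hδdense.exists_dist_lt a hε
    refine ⟨(fun c => c * a') '' B, hspan a' ha'mem, ?_⟩
    rintro _ ⟨c, hc, rfl⟩
    refine ⟨c * a', ⟨c, hc, rfl⟩, ?_⟩
    rw [dist_eq_norm, ← mul_sub]
    calc ‖c * (a - a')‖ ≤ ‖c‖ * ‖a - a'‖ := norm_mul_le _ _
      _ ≤ 1 * ‖a - a'‖ := by
          exact mul_le_mul_of_nonneg_right (hBnorm c hc) (norm_nonneg _)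
      _ = dist a a' := by rw [one_mul, dist_eq_norm]
      _ ≤ ε := ha'.le
  -- orbits of arbitrary a: left multiplication
  have Wl : ∀ a : A, TotallyBounded ((fun c => a * c) '' B) := by
    have hspan : ∀ a ∈ Submodule.span ℂ (Set.range δ),
        TotallyBounded ((fun c => a * c) '' B) := by
      intro a ha
      induction ha using Submodule.span_induction with
      | mem x hx =>
          obtain ⟨n, rfl⟩ := hx
          exact (tbδ n).2
      | zero =>
          have : ((fun c => (0:A) * c) '' B).Subsingleton := by
            rintro _ ⟨c, -, rfl⟩ _ ⟨d, -, rfl⟩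
            simp
          exact this.totallyBounded
      | add x y hx hy ihx ihy =>
          refine TotallyBounded.subset ?_ (totallyBounded_add ihx ihy)
          rintro _ ⟨c, hc, rfl⟩
          exact ⟨x * c, ⟨c, hc, rfl⟩, y * c, ⟨c, hc, rfl⟩, (add_mul x y c).symm⟩
      | smul t x hx ih =>
          have heq : ((fun c => (t • x) * c) '' B) =
              (fun z => t • z) '' ((fun c => x * c) '' B) := by
            rw [Set.image_image]
            exact Set.image_congr (fun c _ => smul_mul_assoc t x c)
          rw [heq]
          exact ih.image (uniformContinuous_const_smul t)
    intro a
    refine totallyBounded_of_approx fun ε hε => ?_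
    obtain ⟨a', ha'mem, ha'⟩ := hδdense.exists_dist_lt a hε
    refine ⟨(fun c => a' * c) '' B, hspan a' ha'mem, ?_⟩
    rintro _ ⟨c, hc, rfl⟩
    refine ⟨a' * c, ⟨c, hc, rfl⟩, ?_⟩
    rw [dist_eq_norm, ← sub_mul]
    calc ‖(a - a') * c‖ ≤ ‖a - a'‖ * ‖c‖ := norm_mul_le _ _
      _ ≤ ‖a - a'‖ * 1 := by
          exact mul_le_mul_of_nonneg_left (hBnorm c hc) (norm_nonneg _)
      _ = dist a a' := by rw [mul_one, dist_eq_norm]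
      _ ≤ ε := ha'.le
  -- total boundedness of dual orbits for all Ψ in EssZ
  have main : ∀ Ψ ∈ EssZ,
      TotallyBounded ((fun c : A => Ψ.comp (rZ c)) '' B) ∧
      TotallyBounded ((fun c : A => Ψ.comp (lZ c)) '' B) := by
    have hgen : ∀ Φ ∈ Submodule.span ℂ
        {Φ : Z →L[ℂ] ℂ | ∃ (a b : A) (Ψ : Z →L[ℂ] ℂ),
          Φ = (Ψ.comp (lZ b)).comp (rZ a)},
        TotallyBounded ((fun c : A => Φ.comp (rZ c)) '' B) ∧
        TotallyBounded ((fun c : A => Φ.comp (lZ c)) '' B) := by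
      intro Φ hΦ
      induction hΦ using Submodule.span_induction with
      | mem x hx =>
          obtain ⟨a, b, Ψ', rfl⟩ := hx
          constructor
          · -- right orbit
            set F : Z →L[ℂ] ℂ := Ψ'.comp (lZ b) with hF
            set g : A →L[ℂ] (Z →L[ℂ] ℂ) := ((compL ℂ Z Z ℂ) F).comp rZ with hg
            have himg : ((fun c : A => ((Ψ'.comp (lZ b)).comp (rZ a)).comp (rZ c)) '' B)
                = g '' ((fun c => c * a) '' B) := by
              rw [Set.image_image]
              refine Set.image_congr fun c _ => ?_
              have : ((Ψ'.comp (lZ b)).comp (rZ a)).comp (rZ c)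
                  = (Ψ'.comp (lZ b)).comp ((rZ a).comp (rZ c)) := by
                rw [ContinuousLinearMap.comp_assoc]
              rw [this, hrr a c]
              simp [hg, hF, compL_apply]
            rw [himg]
            exact (Wr a).image g.uniformContinuous
          · -- left orbit
            set g : A →L[ℂ] (Z →L[ℂ] ℂ) :=
              ((compL ℂ Z Z ℂ).flip (rZ a)).comp (((compL ℂ Z Z ℂ) Ψ').comp lZ) with hg
            have himg : ((fun c : A => ((Ψ'.comp (lZ b)).comp (rZ a)).comp (lZ c)) '' B)
                = g '' ((fun c => b * c) '' B) := by
              rw [Set.image_image]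
              refine Set.image_congr fun c _ => ?_
              have h1 : ((Ψ'.comp (lZ b)).comp (rZ a)).comp (lZ c)
                  = (Ψ'.comp (lZ b)).comp ((rZ a).comp (lZ c)) := by
                rw [ContinuousLinearMap.comp_assoc]
              rw [h1, hlr a c, ← ContinuousLinearMap.comp_assoc,
                ContinuousLinearMap.comp_assoc Ψ' (lZ b) (lZ c), hll b c]
              simp [hg, compL_apply]
            rw [himg]
            exact (Wl b).image g.uniformContinuous
      | zero =>
          constructor
          · have : ((fun c : A => (0 : Z →L[ℂ] ℂ).comp (rZ c)) '' B).Subsingleton := by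
              rintro _ ⟨c, -, rfl⟩ _ ⟨d, -, rfl⟩
              simp
            exact this.totallyBounded
          · have : ((fun c : A => (0 : Z →L[ℂ] ℂ).comp (lZ c)) '' B).Subsingleton := by
              rintro _ ⟨c, -, rfl⟩ _ ⟨d, -, rfl⟩
              simp
            exact this.totallyBounded
      | add x y hx hy ihx ihy =>
          constructor
          · refine TotallyBounded.subset ?_ (totallyBounded_add ihx.1 ihy.1)
            rintro _ ⟨c, hc, rfl⟩
            exact ⟨x.comp (rZ c), ⟨c, hc, rfl⟩, y.comp (rZ c), ⟨c, hc, rfl⟩,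
              (ContinuousLinearMap.add_comp x y (rZ c)).symm⟩
          · refine TotallyBounded.subset ?_ (totallyBounded_add ihx.2 ihy.2)
            rintro _ ⟨c, hc, rfl⟩
            exact ⟨x.comp (lZ c), ⟨c, hc, rfl⟩, y.comp (lZ c), ⟨c, hc, rfl⟩,
              (ContinuousLinearMap.add_comp x y (lZ c)).symm⟩
      | smul t x hx ih =>
          constructor
          · have heq : ((fun c : A => (t • x).comp (rZ c)) '' B) =
                (fun g => t • g) '' ((fun c : A => x.comp (rZ c)) '' B) := by
              rw [Set.image_image]
              exact Set.image_congr fun c _ =>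
                (ContinuousLinearMap.smul_comp t x (rZ c))
            rw [heq]
            exact ih.1.image (uniformContinuous_const_smul t)
          · have heq : ((fun c : A => (t • x).comp (lZ c)) '' B) =
                (fun g => t • g) '' ((fun c : A => x.comp (lZ c)) '' B) := by
              rw [Set.image_image]
              exact Set.image_congr fun c _ =>
                (ContinuousLinearMap.smul_comp t x (lZ c))
            rw [heq]
            exact ih.2.image (uniformContinuous_const_smul t)
    intro Ψ hΨ
    rw [hEssZ] at hΨ
    have approx : ∀ ε > (0:ℝ), ∃ Φ : Z →L[ℂ] ℂ,
        Φ ∈ Submodule.span ℂ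
          {Φ : Z →L[ℂ] ℂ | ∃ (a b : A) (Ψ : Z →L[ℂ] ℂ),
            Φ = (Ψ.comp (lZ b)).comp (rZ a)} ∧
        ‖Ψ - Φ‖ ≤ ε := by
      intro ε hε
      obtain ⟨Φ, hΦmem, hΦ⟩ := Metric.mem_closure_iff.1 hΨ ε hε
      exact ⟨Φ, hΦmem, by rw [← dist_eq_norm]; exact hΦ.le⟩
    constructor
    · refine totallyBounded_of_approx fun ε hε => ?_
      have hεpos : (0:ℝ) < ε / (‖rZ‖ + 1) := by positivity
      obtain ⟨Φ, hΦmem, hΦ⟩ := approx _ hεpos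
      refine ⟨(fun c : A => Φ.comp (rZ c)) '' B, (hgen Φ hΦmem).1, ?_⟩
      rintro _ ⟨c, hc, rfl⟩
      refine ⟨Φ.comp (rZ c), ⟨c, hc, rfl⟩, ?_⟩
      rw [dist_eq_norm]
      have h1 : Ψ.comp (rZ c) - Φ.comp (rZ c) = (Ψ - Φ).comp (rZ c) := by
        rw [ContinuousLinearMap.sub_comp]
      rw [h1]
      calc ‖(Ψ - Φ).comp (rZ c)‖ ≤ ‖Ψ - Φ‖ * ‖rZ c‖ :=
            ContinuousLinearMap.opNorm_comp_le _ _
        _ ≤ (ε / (‖rZ‖ + 1)) * (‖rZ‖ * ‖c‖) := by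
            refine mul_le_mul hΦ (le_opNorm rZ c) (norm_nonneg _) hεpos.le
        _ ≤ (ε / (‖rZ‖ + 1)) * (‖rZ‖ + 1) := by
            refine mul_le_mul_of_nonneg_left ?_ hεpos.le
            have h2 := hBnorm c hc
            nlinarith [norm_nonneg rZ, norm_nonneg c]
        _ = ε := by field_simp
    · refine totallyBounded_of_approx fun ε hε => ?_
      have hεpos : (0:ℝ) < ε / (‖lZ‖ + 1) := by positivity
      obtain ⟨Φ, hΦmem, hΦ⟩ := approx _ hεpos
      refine ⟨(fun c : A => Φ.comp (lZ c)) '' B, (hgen Φ hΦmem).2, ?_⟩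
      rintro _ ⟨c, hc, rfl⟩
      refine ⟨Φ.comp (lZ c), ⟨c, hc, rfl⟩, ?_⟩
      rw [dist_eq_norm]
      have h1 : Ψ.comp (lZ c) - Φ.comp (lZ c) = (Ψ - Φ).comp (lZ c) := by
        rw [ContinuousLinearMap.sub_comp]
      rw [h1]
      calc ‖(Ψ - Φ).comp (lZ c)‖ ≤ ‖Ψ - Φ‖ * ‖lZ c‖ :=
            ContinuousLinearMap.opNorm_comp_le _ _
        _ ≤ (ε / (‖lZ‖ + 1)) * (‖lZ‖ * ‖c‖) := by
            refine mul_le_mul hΦ (le_opNorm lZ c) (norm_nonneg _) hεpos.le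
        _ ≤ (ε / (‖lZ‖ + 1)) * (‖lZ‖ + 1) := by
            refine mul_le_mul_of_nonneg_left ?_ hεpos.le
            have h2 := hBnorm c hc
            nlinarith [norm_nonneg lZ, norm_nonneg c]
        _ = ε := by field_simp
  intro Ψ hΨ
  obtain ⟨tb1, tb2⟩ := main Ψ hΨ
  have hc1 : IsCompact (closure ((fun c : A => Ψ.comp (rZ c)) '' B)) :=
    TotallyBounded.isCompact_of_isClosed (totallyBounded_closure.2 tb1) isClosed_closure
  have hc2 : IsCompact (closure ((fun c : A => Ψ.comp (lZ c)) '' B)) :=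
    TotallyBounded.isCompact_of_isClosed (totallyBounded_closure.2 tb2) isClosed_closure
  have himg1 : ((compL ℂ Z Z ℂ Ψ).comp rZ) '' B = (fun c : A => Ψ.comp (rZ c)) '' B := by
    refine Set.image_congr fun c _ => ?_
    simp [compL_apply]
  have himg2 : ((compL ℂ Z Z ℂ Ψ).comp lZ) '' B = (fun c : A => Ψ.comp (lZ c)) '' B := by
    refine Set.image_congr fun c _ => ?_
    simp [compL_apply]
  refine ⟨hc1, hc2, ?_, ?_⟩
  · unfold IsWeaklyCompactOp
    exact isWeaklyCompact_of_compact _ (by rw [himg1]; exact hc1)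
  · unfold IsWeaklyCompactOp
    exact isWeaklyCompact_of_compact _ (by rw [himg2]; exact hc2)

end
end
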